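/- For all n ≥ 2, the number of (unordered) paths between distinct vertices, summed over all plane trees on n vertices, equals the total number of edges in all vertical paths in all plane trees on n vertices; both equal binom(n,2)·C(n-1). -/

import Mathlib

inductive PlaneTree : Type where
  | node : List PlaneTree → PlaneTree

namespace PlaneTree

mutual
def size : PlaneTree → ℕ
  | .node ts => 1 + sizeList ts
def sizeList : List PlaneTree → ℕ
  | [] => 0
  | t :: ts => size t + sizeList ts
end

mutual
def positions : PlaneTree → List (List ℕ)
  | .node ts => [] :: positionsList 0 ts
def positionsList : ℕ → List PlaneTree → List (List ℕ)
  | _, [] => []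
  | i, t :: ts => (positions t).map (i :: ·) ++ positionsList (i+1) ts
end

mutual
def leafPositions : PlaneTree → List (List ℕ)
  | .node [] => [[]]
  | .node (t :: ts) => leafList 0 (t :: ts)
def leafList : ℕ → List PlaneTree → List (List ℕ)
  | _, [] => []
  | i, t :: ts => (leafPositions t).map (i :: ·) ++ leafList (i+1) ts
end

def isPrefixB : List ℕ → List ℕ → Bool
  | [], _ => true
  | _ :: _, [] => false
  | a :: as, b :: bs => a == b && isPrefixB as bs

def lcpLen : List ℕ → List ℕ → ℕ
  | a :: as, b :: bs => if a = b then 1 + lcpLen as bs else 0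
  | _, _ => 0

/-- number of edges on the path between two vertices given by positions -/
def pathDist (p q : List ℕ) : ℕ :=
  (p.length - lcpLen p q) + (q.length - lcpLen p q)

/-- number of vertical paths (vertex, proper descendant) in a tree -/
def verticalPairs (T : PlaneTree) : ℕ :=
  ((positions T).map (fun q =>
    ((positions T).filter (fun p => p != q && isPrefixB p q)).length)).sum

/-- total number of edges over all vertical paths in a tree -/
def verticalEdges (T : PlaneTree) : ℕ :=
  ((positions T).map (fun q =>
    (((positions T).filter (fun p => p != q && isPrefixB p q)).map
      (fun p => q.length - p.length)).sum)).sum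

/-- number of (unordered) paths between distinct vertices -/
def pathCount (T : PlaneTree) : ℕ := ((positions T).sublistsLen 2).length

/-- Wiener index: sum of distances over unordered pairs of distinct vertices -/
def wiener (T : PlaneTree) : ℕ :=
  (((positions T).sublistsLen 2).map (fun l =>
    match l with
    | [p, q] => pathDist p q
    | _ => 0)).sum

end PlaneTree

/-!
Every tree on `n` vertices has `C(n, 2)` paths. A vertex at depth `d` is the lower end of `d`
vertical paths, with `1 + ⋯ + d = C(d + 1, 2)` edges in total, so the vertical edges of a tree
add up to `∑_v C(depth v + 1, 2)`.

Forests on `m` vertices correspond to binary trees on `m` nodes (first child, next sibling), so a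
sum of `f (depth v)` over all plane trees on `m + 1` vertices satisfies a Catalan-type convolution
recursion in `m`. With the identity `∑_{i+j=m} C(2i, i) C(2j, j) = 4 ^ m` and its relatives, the
recursion gives `2 ∑_T ∑_v depth v = 4 ^ m - C(2m, m)` and
`2 ∑_T ∑_v C(depth v + 1, 2) = m C(2m, m) = 2 C(m + 1, 2) Cat(m)`.
-/

theorem List.sum_map_range_sub_eq_choose (d : ℕ) :
    ((List.range d).map fun k => d - k).sum = (d + 1).choose 2 := by
  induction d with
  | zero => rfl
  | succ d ih =>
    rw [List.range_succ_eq_map, List.map_cons, List.sum_cons, List.map_map]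
    simp only [Function.comp_def, Nat.succ_eq_add_one, Nat.add_sub_add_right, ih, Nat.sub_zero]
    rw [Nat.choose_succ_succ (d + 1) 1, Nat.choose_one_right]

section CatalanIdentities

open Finset Nat

theorem two_mul_sum_antidiagonal_fst_mul {R : Type*} [CommSemiring R] (f : ℕ → R) (m : ℕ) :
    2 * ∑ p ∈ antidiagonal m, (p.1 : R) * (f p.1 * f p.2) =
      m * ∑ p ∈ antidiagonal m, f p.1 * f p.2 := by
  rw [two_mul]
  nth_rewrite 2 [← Nat.sum_antidiagonal_swap]
  rw [← sum_add_distrib, mul_sum]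
  refine sum_congr rfl fun p hp => ?_
  rw [← mem_antidiagonal.1 hp, Prod.fst_swap, Prod.snd_swap, Nat.cast_add]
  ring

/- The generating function `B = ∑ C(2n, n) xⁿ` satisfies `(1 - 4x) B' = 2B`, hence
`(1 - 4x) (B²)' = 4B²`: comparing coefficients of `xᵐ` gives the induction step. -/
theorem sum_antidiagonal_centralBinom_mul (m : ℕ) :
    ∑ p ∈ antidiagonal m, centralBinom p.1 * centralBinom p.2 = 4 ^ m := by
  have hsym (n : ℕ) := two_mul_sum_antidiagonal_fst_mul centralBinom n
  simp only [Nat.cast_id] at hsym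
  induction m with
  | zero => simp
  | succ m ih =>
    refine Nat.eq_of_mul_eq_mul_left (Nat.add_one_pos m) ?_
    calc (m + 1) * ∑ p ∈ antidiagonal (m + 1), centralBinom p.1 * centralBinom p.2
        = 2 * ∑ p ∈ antidiagonal m, (p.1 + 1) * centralBinom (p.1 + 1) * centralBinom p.2 := by
          rw [← hsym, Nat.sum_antidiagonal_succ]
          simp [mul_assoc]
      _ = 2 * (2 * (2 * ∑ p ∈ antidiagonal m, p.1 * (centralBinom p.1 * centralBinom p.2)) +
            2 * ∑ p ∈ antidiagonal m, centralBinom p.1 * centralBinom p.2) := by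
          simp only [succ_mul_centralBinom_succ, mul_sum, ← sum_add_distrib]
          exact sum_congr rfl fun p _ => by ring
      _ = (m + 1) * 4 ^ (m + 1) := by
          rw [hsym, ih]
          ring

theorem two_mul_catalan_add_centralBinom_succ (n : ℕ) :
    2 * catalan n + centralBinom (n + 1) = 4 * centralBinom n := by
  refine Nat.eq_of_mul_eq_mul_left (Nat.add_one_pos n) ?_
  rw [mul_add, succ_mul_centralBinom_succ, ← succ_mul_catalan_eq_centralBinom]
  ring

theorem two_mul_sum_antidiagonal_four_pow_mul_catalan_add (m : ℕ) :
    2 * ∑ p ∈ antidiagonal m, 4 ^ p.1 * catalan p.2 + centralBinom (m + 1) = 4 ^ (m + 1) := by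
  induction m with
  | zero => simp [centralBinom, Nat.choose]
  | succ m ih =>
    have h := two_mul_catalan_add_centralBinom_succ (m + 1)
    rw [Nat.sum_antidiagonal_succ]
    simp only [pow_succ, pow_zero, one_mul, mul_right_comm _ 4] at ih h ⊢
    rw [← sum_mul]
    linarith

theorem two_mul_sum_antidiagonal_centralBinom_mul_catalan (m : ℕ) :
    2 * ∑ p ∈ antidiagonal m, centralBinom p.1 * catalan p.2 = centralBinom (m + 1) := by
  have h := two_mul_sum_antidiagonal_fst_mul catalan m
  simp only [Nat.cast_id, ← catalan_succ'] at h
  simp only [← succ_mul_catalan_eq_centralBinom, add_mul, one_mul, mul_assoc, sum_add_distrib,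
    ← catalan_succ', mul_add, h]
  ring

/- `2 Cat(j) = 4 C(2j, j) - C(2j + 2, j + 1)` turns the Catalan convolution into two
central binomial ones, both evaluated by `sum_antidiagonal_centralBinom_mul`. -/
theorem two_mul_sum_antidiagonal_mul_centralBinom_mul_catalan_add (m : ℕ) :
    2 * ∑ p ∈ antidiagonal m, p.1 * centralBinom p.1 * catalan p.2 + 2 * 4 ^ m =
      (m + 1) * centralBinom (m + 1) := by
  have hsym (n : ℕ) :
      2 * ∑ p ∈ antidiagonal n, p.1 * centralBinom p.1 * centralBinom p.2 = n * 4 ^ n := by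
    simpa [mul_assoc, sum_antidiagonal_centralBinom_mul] using
      two_mul_sum_antidiagonal_fst_mul centralBinom n
  have hshift := Nat.sum_antidiagonal_succ' (n := m)
    (f := fun p => p.1 * centralBinom p.1 * centralBinom p.2)
  have hcat : ∑ p ∈ antidiagonal m, p.1 * centralBinom p.1 *
      (2 * catalan p.2 + centralBinom (p.2 + 1)) =
      4 * ∑ p ∈ antidiagonal m, p.1 * centralBinom p.1 * centralBinom p.2 := by
    simp only [two_mul_catalan_add_centralBinom_succ, mul_sum]
    exact sum_congr rfl fun p _ => by ring
  simp only [mul_add, sum_add_distrib, centralBinom_zero, mul_one] at hcat hshift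
  have h1 := hsym m
  have h2 := hsym (m + 1)
  rw [pow_succ] at h2
  simp only [← mul_sum, mul_left_comm _ 2] at hcat
  linarith

end CatalanIdentities

namespace PlaneTree

mutual
theorem length_positions : ∀ t : PlaneTree, (positions t).length = size t
  | .node ts => by rw [positions, size, List.length_cons, length_positionsList, Nat.add_comm]
theorem length_positionsList : ∀ (i : ℕ) (ts : List PlaneTree),
    (positionsList i ts).length = sizeList ts
  | _, [] => by rw [positionsList, sizeList]; rfl
  | i, t :: ts => by
    rw [positionsList, sizeList, List.length_append, List.length_map, length_positions t,
      length_positionsList (i + 1) ts]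
end

theorem exists_cons_of_mem_positionsList {q : List ℕ} {i : ℕ} {ts : List PlaneTree}
    (hq : q ∈ positionsList i ts) : ∃ j ≥ i, ∃ r, q = j :: r := by
  induction ts generalizing i with
  | nil => simp [positionsList] at hq
  | cons t ts ih =>
    rw [positionsList, List.mem_append, List.mem_map] at hq
    obtain ⟨r, -, rfl⟩ | hq := hq
    · exact ⟨i, le_rfl, r, rfl⟩
    · obtain ⟨j, hj, r, rfl⟩ := ih hq
      exact ⟨j, by omega, r, rfl⟩

mutual
theorem nodup_positions : ∀ t : PlaneTree, (positions t).Nodup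
  | .node ts => by
    rw [positions, List.nodup_cons]
    refine ⟨fun h => ?_, nodup_positionsList 0 ts⟩
    obtain ⟨j, -, r, hr⟩ := exists_cons_of_mem_positionsList h
    exact List.cons_ne_nil _ _ hr.symm
theorem nodup_positionsList : ∀ (i : ℕ) (ts : List PlaneTree), (positionsList i ts).Nodup
  | _, [] => by rw [positionsList]; exact List.nodup_nil
  | i, t :: ts => by
    rw [positionsList]
    refine ((nodup_positions t).map List.cons_injective).append
      (nodup_positionsList (i + 1) ts) fun q hq hq' => ?_
    obtain ⟨r, -, rfl⟩ := List.mem_map.1 hq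
    obtain ⟨j, hj, r', hr'⟩ := exists_cons_of_mem_positionsList hq'
    cases hr'
    omega
end

mutual
theorem mem_positions_of_prefix : ∀ (t : PlaneTree) {p q : List ℕ},
    q ∈ positions t → p <+: q → p ∈ positions t
  | .node ts, p, q, hq, hpq => by
    rw [positions] at hq ⊢
    rcases p with _ | ⟨j, p⟩
    · exact List.mem_cons_self
    obtain rfl | hq := List.mem_cons.1 hq
    · exact absurd (List.prefix_nil.1 hpq) (List.cons_ne_nil _ _)
    obtain ⟨j', -, q, rfl⟩ := exists_cons_of_mem_positionsList hq
    obtain ⟨rfl, hpq'⟩ := List.cons_prefix_cons.1 hpq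
    exact List.mem_cons_of_mem _ (cons_mem_positionsList_of_prefix 0 ts hq hpq')
theorem cons_mem_positionsList_of_prefix : ∀ (i : ℕ) (ts : List PlaneTree) {j : ℕ}
    {p q : List ℕ}, j :: q ∈ positionsList i ts → p <+: q → j :: p ∈ positionsList i ts
  | _, [], _, _, _, hq, _ => by simp [positionsList] at hq
  | i, t :: ts, j, p, q, hq, hpq => by
    rw [positionsList, List.mem_append] at hq ⊢
    obtain hq | hq := hq
    · obtain ⟨r, hr, hrq⟩ := List.mem_map.1 hq
      obtain ⟨rfl, rfl⟩ := List.cons_eq_cons.1 hrq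
      exact Or.inl (List.mem_map_of_mem (mem_positions_of_prefix t hr hpq))
    · exact Or.inr (cons_mem_positionsList_of_prefix (i + 1) ts hq hpq)
end

theorem isPrefixB_iff (p q : List ℕ) : isPrefixB p q = true ↔ p <+: q := by
  induction p generalizing q with
  | nil => simp [isPrefixB]
  | cons a p ih =>
    cases q with
    | nil => simp [isPrefixB]
    | cons b q => rw [isPrefixB, Bool.and_eq_true, beq_iff_eq, ih, List.cons_prefix_cons]

theorem filter_properPrefix_perm {T : PlaneTree} {q : List ℕ} (hq : q ∈ positions T) :
    ((positions T).filter fun p => p != q && isPrefixB p q).Perm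
      ((List.range q.length).map q.take) := by
  have hlen {k : ℕ} (hk : k < q.length) : (q.take k).length = k := List.length_take_of_le hk.le
  refine (List.perm_ext_iff_of_nodup ((nodup_positions T).filter _) ?_).2 fun p => ?_
  · exact List.nodup_range.map_on fun i hi j hj h => by
      rw [← hlen (List.mem_range.1 hi), ← hlen (List.mem_range.1 hj), h]
  simp only [List.mem_filter, Bool.and_eq_true, bne_iff_ne, isPrefixB_iff, List.mem_map,
    List.mem_range]
  constructor
  · rintro ⟨-, hne, hpq⟩
    refine ⟨p.length, lt_of_le_of_ne hpq.length_le fun h => hne (hpq.eq_of_length h), ?_⟩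
    exact (List.prefix_iff_eq_take.1 hpq).symm
  · rintro ⟨k, hk, rfl⟩
    refine ⟨mem_positions_of_prefix T hq (List.take_prefix k q), fun h => ?_,
      List.take_prefix k q⟩
    have := hlen hk
    rw [h] at this
    omega

def depthSum (f : ℕ → ℕ) (T : PlaneTree) : ℕ := ((positions T).map fun q => f q.length).sum

theorem verticalEdges_eq_depthSum (T : PlaneTree) :
    verticalEdges T = depthSum (fun d => (d + 1).choose 2) T := by
  refine congrArg List.sum (List.map_congr_left fun q hq => ?_)
  rw [((filter_properPrefix_perm hq).map _).sum_eq, List.map_map]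
  refine (Eq.trans ?_ (List.sum_map_range_sub_eq_choose q.length))
  refine congrArg List.sum (List.map_congr_left fun k hk => ?_)
  rw [Function.comp_apply, List.length_take_of_le (List.mem_range.1 hk).le]

theorem depthSum_one (T : PlaneTree) : depthSum (fun _ => 1) T = size T := by
  rw [depthSum, List.map_const', List.sum_replicate, smul_eq_mul, mul_one, length_positions]

theorem depthSum_add (f g : ℕ → ℕ) (T : PlaneTree) :
    depthSum (fun d => f d + g d) T = depthSum f T + depthSum g T :=
  List.sum_map_add

theorem depthSum_node_nil (f : ℕ → ℕ) : depthSum f (node []) = f 0 := by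
  simp [depthSum, positions, positionsList]

theorem map_length_positionsList (i j : ℕ) (ts : List PlaneTree) :
    (positionsList i ts).map List.length = (positionsList j ts).map List.length := by
  induction ts generalizing i j with
  | nil => simp [positionsList]
  | cons t ts ih => simp [positionsList, ih (i + 1) (j + 1)]

theorem depthSum_node_cons (f : ℕ → ℕ) (t : PlaneTree) (ts : List PlaneTree) :
    depthSum f (node (t :: ts)) = depthSum (fun d => f (d + 1)) t + depthSum f (node ts) := by
  have h := congrArg (fun l => (l.map f).sum) (map_length_positionsList 1 0 ts)
  simp only [List.map_map, Function.comp_def] at h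
  simp only [depthSum, positions, positionsList, List.map_cons, List.sum_cons, List.map_append,
    List.sum_append, List.map_map, Function.comp_def, List.length_cons, h]
  ring

open Finset BinaryTree
open Nat (centralBinom)

def ofBinary : BinaryTree Unit → List PlaneTree
  | .nil => []
  | .node _ l r => node (ofBinary l) :: ofBinary r

def toBinary : List PlaneTree → BinaryTree Unit
  | [] => .nil
  | node G :: F => .node () (toBinary G) (toBinary F)

theorem ofBinary_toBinary (F : List PlaneTree) : ofBinary (toBinary F) = F := by
  induction F using toBinary.induct with
  | case1 => rw [toBinary, ofBinary]
  | case2 G F hG hF => rw [toBinary, ofBinary, hG, hF]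

theorem toBinary_ofBinary (x : BinaryTree Unit) : toBinary (ofBinary x) = x := by
  induction x with
  | nil => rw [ofBinary, toBinary]
  | node _ l r hl hr => rw [ofBinary, toBinary, hl, hr]

theorem sizeList_ofBinary (x : BinaryTree Unit) : sizeList (ofBinary x) = x.numNodes := by
  induction x with
  | nil => rfl
  | node _ l r hl hr => rw [ofBinary, sizeList, size, hl, hr, numNodes]; ring

theorem finsum_size_eq_sum {M : Type*} [AddCommMonoid M] (g : PlaneTree → M) (m : ℕ) :
    ∑ᶠ T : {T : PlaneTree // T.size = m + 1}, g T.1 =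
      ∑ x ∈ treesOfNumNodesEq m, g (node (ofBinary x)) := by
  let e : BinaryTree Unit ↪ PlaneTree :=
    ⟨fun x => node (ofBinary x), fun x y h => by
      rw [← toBinary_ofBinary x, ← toBinary_ofBinary y, node.inj h]⟩
  have hset : {T : PlaneTree | T.size = m + 1} = ↑((treesOfNumNodesEq m).map e) := by
    ext ⟨F⟩
    simp only [Set.mem_ofPred_eq, coe_map, Set.mem_image, mem_coe, mem_treesOfNumNodesEq]
    constructor
    · intro h
      refine ⟨toBinary F, ?_, congrArg node (ofBinary_toBinary F)⟩
      rw [← sizeList_ofBinary, ofBinary_toBinary]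
      rw [size] at h
      omega
    · rintro ⟨x, rfl, hx⟩
      cases hx
      simp [size, sizeList_ofBinary, add_comm]
  rw [finsum_subtype_eq_finsum_cond]
  change ∑ᶠ (T) (_ : T ∈ {T : PlaneTree | T.size = m + 1}), g T = _
  rw [hset, finsum_mem_coe_finset, sum_map]
  rfl

theorem sum_treesOfNumNodesEq_succ {M : Type*} [AddCommMonoid M] (h : BinaryTree Unit → M)
    (m : ℕ) :
    ∑ x ∈ treesOfNumNodesEq (m + 1), h x = ∑ p ∈ antidiagonal m,
      ∑ l ∈ treesOfNumNodesEq p.1, ∑ r ∈ treesOfNumNodesEq p.2, h (.node () l r) := by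
  rw [treesOfNumNodesEq_succ, sum_biUnion]
  · simp only [sum_map, sum_product]
    rfl
  · simp_rw [Set.PairwiseDisjoint, Set.Pairwise, disjoint_left]
    aesop

/-- Indexed by `m`, but summed over the plane trees on `m + 1` vertices. -/
def depthTotal (f : ℕ → ℕ) (m : ℕ) : ℕ :=
  ∑ x ∈ treesOfNumNodesEq m, depthSum f (node (ofBinary x))

theorem depthTotal_zero (f : ℕ → ℕ) : depthTotal f 0 = f 0 := by
  simp [depthTotal, ofBinary, depthSum_node_nil]

theorem depthTotal_add (f g : ℕ → ℕ) (m : ℕ) :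
    depthTotal (fun d => f d + g d) m = depthTotal f m + depthTotal g m := by
  simp only [depthTotal, depthSum_add, sum_add_distrib]

theorem depthTotal_one (m : ℕ) : depthTotal (fun _ => 1) m = (m + 1) * catalan m := by
  rw [depthTotal, sum_congr rfl fun x hx => ?_, sum_const, treesOfNumNodesEq_card_eq_catalan,
    smul_eq_mul, mul_comm]
  rw [depthSum_one, size, sizeList_ofBinary, mem_treesOfNumNodesEq.1 hx, add_comm]

theorem depthTotal_succ (f : ℕ → ℕ) (m : ℕ) :
    depthTotal f (m + 1) = ∑ p ∈ antidiagonal m,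
      catalan p.2 * (depthTotal (fun d => f (d + 1)) p.1 + depthTotal f p.1) := by
  rw [depthTotal, sum_treesOfNumNodesEq_succ]
  simp only [ofBinary, depthSum_node_cons, sum_add_distrib, sum_const,
    treesOfNumNodesEq_card_eq_catalan, smul_eq_mul, ← mul_sum, mul_add]
  rw [← Nat.sum_antidiagonal_swap (f := fun p => catalan p.2 * depthTotal f p.1)]
  rfl

theorem two_mul_depthTotal_id_add (m : ℕ) :
    2 * depthTotal (fun d => d) m + centralBinom m = 4 ^ m := by
  induction m using Nat.strong_induction_on with
  | _ m ih =>
  cases m with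
  | zero => simp [depthTotal_zero]
  | succ m =>
    rw [depthTotal_succ, ← two_mul_sum_antidiagonal_four_pow_mul_catalan_add]
    congr 2
    refine sum_congr rfl fun p hp => ?_
    have hi := ih p.1 (by have := mem_antidiagonal.1 hp; omega)
    rw [depthTotal_add, depthTotal_one, succ_mul_catalan_eq_centralBinom, ← hi]
    ring

theorem two_mul_depthTotal_choose (m : ℕ) :
    2 * depthTotal (fun d => (d + 1).choose 2) m = m * centralBinom m := by
  induction m using Nat.strong_induction_on with
  | _ m ih =>
  cases m with
  | zero => simp [depthTotal_zero]
  | succ m =>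
    have hshift : (fun d => (d + 1 + 1).choose 2) = fun d => (d + 1).choose 2 + (d + 1) := by
      funext d
      rw [Nat.choose_succ_succ (d + 1) 1, Nat.choose_one_right, add_comm]
    rw [depthTotal_succ, hshift, mul_sum]
    have hterm : ∀ p ∈ antidiagonal m,
        2 * (catalan p.2 * (depthTotal (fun d => (d + 1).choose 2 + (d + 1)) p.1 +
          depthTotal (fun d => (d + 1).choose 2) p.1)) =
        2 * (p.1 * centralBinom p.1 * catalan p.2) + 4 ^ p.1 * catalan p.2 +
          centralBinom p.1 * catalan p.2 := by
      intro p hp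
      have hV := ih p.1 (by have := mem_antidiagonal.1 hp; omega)
      have hA := two_mul_depthTotal_id_add p.1
      rw [depthTotal_add, depthTotal_add, depthTotal_one, succ_mul_catalan_eq_centralBinom, ← hV,
        ← hA]
      ring
    rw [sum_congr rfl hterm, sum_add_distrib, sum_add_distrib, ← mul_sum]
    have h1 := two_mul_sum_antidiagonal_mul_centralBinom_mul_catalan_add m
    have h2 := two_mul_sum_antidiagonal_four_pow_mul_catalan_add m
    have h3 := two_mul_sum_antidiagonal_centralBinom_mul_catalan m
    rw [pow_succ] at h2
    linarith

theorem pathCount_eq_choose (T : PlaneTree) : pathCount T = (size T).choose 2 := by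
  rw [pathCount, List.length_sublistsLen, length_positions]

theorem sum_pathCount (m : ℕ) :
    ∑ x ∈ treesOfNumNodesEq m, pathCount (node (ofBinary x)) =
      (m + 1).choose 2 * catalan m := by
  rw [sum_congr rfl fun x hx => ?_, sum_const, treesOfNumNodesEq_card_eq_catalan, smul_eq_mul,
    mul_comm]
  rw [pathCount_eq_choose, size, sizeList_ofBinary, mem_treesOfNumNodesEq.1 hx, add_comm]

theorem sum_verticalEdges (m : ℕ) :
    ∑ x ∈ treesOfNumNodesEq m, verticalEdges (node (ofBinary x)) =
      (m + 1).choose 2 * catalan m := by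
  have h := two_mul_depthTotal_choose m
  have hc := Nat.add_one_mul_choose_eq m 1
  rw [← succ_mul_catalan_eq_centralBinom, depthTotal] at h
  rw [Nat.choose_one_right] at hc
  simp only [verticalEdges_eq_depthSum]
  refine Nat.eq_of_mul_eq_mul_left two_pos ?_
  rw [h, ← mul_assoc, ← mul_assoc, mul_comm m, hc]
  ring

end PlaneTree

theorem total_paths_eq_total_vertical_edges_plane_trees (n : ℕ) (hn : 2 ≤ n) :
    (∑ᶠ T : {T : PlaneTree // T.size = n}, (T.1.pathCount : ℚ))
        = (∑ᶠ T : {T : PlaneTree // T.size = n}, (T.1.verticalEdges : ℚ)) ∧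
      (∑ᶠ T : {T : PlaneTree // T.size = n}, (T.1.pathCount : ℚ))
        = (n.choose 2 : ℚ) * ((1 / (n : ℚ)) * ((2 * n - 2).choose (n - 1) : ℚ)) := by
  obtain ⟨m, rfl⟩ : ∃ m, n = m + 1 := ⟨n - 1, by omega⟩
  rw [PlaneTree.finsum_size_eq_sum (fun T => (T.pathCount : ℚ)),
    PlaneTree.finsum_size_eq_sum (fun T => (T.verticalEdges : ℚ)), ← Nat.cast_sum,
    ← Nat.cast_sum, PlaneTree.sum_pathCount, PlaneTree.sum_verticalEdges, mul_add_one,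
    Nat.add_sub_cancel, Nat.add_sub_cancel, ← Nat.centralBinom_eq_two_mul_choose,
    ← succ_mul_catalan_eq_centralBinom]
  refine ⟨rfl, ?_⟩
  push_cast
  field_simp
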